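/- arXiv:1608.06568 — 4 statements merged into one kernel-verified Lean document; each statement's English description precedes it below -/
import Mathlib

section
/- Let a₁, …, aₙ be positive integers. Then the number of perfect matchings of the snake graph 𝒢[a₁, …, aₙ] equals the continuant K(a₁, …, aₙ), i.e. m(𝒢[a₁, …, aₙ]) is the numerator of the continued fraction [a₁, …, aₙ] in lowest terms. -/
/-- Auxiliary function for the continuant: `contAux` applied to the reversed list realizes
the recursion `K(a₁,…,aₙ) = aₙ·K(a₁,…,aₙ₋₁) + K(a₁,…,aₙ₋₂)`, `K() = 1`, `K(a₁) = a₁`. -/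
def contAux : List ℕ → ℕ
  | [] => 1
  | [a] => a
  | a :: b :: t => a * contAux (b :: t) + contAux t

/-- The continuant `K(a₁,…,aₙ)` of a list of natural numbers. -/
def continuant (l : List ℕ) : ℕ := contAux l.reverse

/-- `isTurnPoint a k` holds iff `k = ℓᵢ = a₁ + ⋯ + aᵢ` for some `1 ≤ i ≤ n − 1`,
where `n = a.length`. -/
def isTurnPoint (a : List ℕ) (k : ℕ) : Bool :=
  (List.range a.length).any fun i => decide (1 ≤ i ∧ (a.take i).sum = k)

/-- Exchange of the two coordinate directions `(1,0) ↔ (0,1)`. -/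
def flipDir (p : ℤ × ℤ) : ℤ × ℤ := (p.2, p.1)

/-- The step directions `δ₁, …, δ_{d−1}`: `δ₁ = (1,0)`, and for `k ≥ 2`,
`δ_k = δ_{k−1}` if `k = ℓᵢ` for some `1 ≤ i ≤ n−1`, and `δ_k ≠ δ_{k−1}` otherwise. -/
def delta (a : List ℕ) : ℕ → ℤ × ℤ
  | 0 => ((1 : ℤ), (0 : ℤ))
  | 1 => ((1 : ℤ), (0 : ℤ))
  | k + 2 => if isTurnPoint a (k + 2) then delta a (k + 1) else flipDir (delta a (k + 1))

/-- The bottom-left corners `p₁, …, p_d` of the tiles: `p₁ = (0,0)`, `p_{k+1} = p_k + δ_k`. -/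
def snakePos (a : List ℕ) : ℕ → ℤ × ℤ
  | 0 => ((0 : ℤ), (0 : ℤ))
  | 1 => ((0 : ℤ), (0 : ℤ))
  | k + 2 => snakePos a (k + 1) + delta a (k + 1)

/-- The four corners of a unit tile, relative to its bottom-left corner. -/
def corners : Set (ℤ × ℤ) :=
  {((0 : ℤ), (0 : ℤ)), ((1 : ℤ), (0 : ℤ)), ((0 : ℤ), (1 : ℤ)), ((1 : ℤ), (1 : ℤ))}

/-- The vertex set of the snake graph `𝒢[a₁,…,aₙ]`: the corners of the `d = a₁+⋯+aₙ−1`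
tiles with bottom-left corners `p₁,…,p_d`; by convention, if `a₁+⋯+aₙ = 1`, the graph is
a single edge. -/
def snakeVerts (a : List ℕ) : Set (ℤ × ℤ) :=
  if a.sum = 1 then {((0 : ℤ), (0 : ℤ)), ((1 : ℤ), (0 : ℤ))}
  else {v | ∃ k ∈ Finset.Icc 1 (a.sum - 1), ∃ ε ∈ corners, v = snakePos a k + ε}

/-- The four sides of the unit tile with bottom-left corner `q`, as unordered pairs. -/
def tileSides (q : ℤ × ℤ) : Set (Sym2 (ℤ × ℤ)) :=
  { s(q, q + ((1 : ℤ), (0 : ℤ))), s(q, q + ((0 : ℤ), (1 : ℤ))),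
    s(q + ((1 : ℤ), (0 : ℤ)), q + ((1 : ℤ), (1 : ℤ))),
    s(q + ((0 : ℤ), (1 : ℤ)), q + ((1 : ℤ), (1 : ℤ))) }

/-- The edge set of the snake graph `𝒢[a₁,…,aₙ]`: two vertices are adjacent exactly when
the segment joining them is a side of one of the tiles. -/
def snakeEdges (a : List ℕ) : Set (Sym2 (ℤ × ℤ)) :=
  if a.sum = 1 then {s(((0 : ℤ), (0 : ℤ)), ((1 : ℤ), (0 : ℤ)))}
  else {e | ∃ k ∈ Finset.Icc 1 (a.sum - 1), e ∈ tileSides (snakePos a k)}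

/-- A perfect matching of the snake graph `𝒢[a₁,…,aₙ]`: a set of its edges covering
every vertex exactly once. -/
def IsSnakePerfectMatching (a : List ℕ) (P : Set (Sym2 (ℤ × ℤ))) : Prop :=
  P ⊆ snakeEdges a ∧ ∀ v ∈ snakeVerts a, ∃! e, e ∈ P ∧ v ∈ e

/-- `m(𝒢[a₁,…,aₙ])`: the number of perfect matchings of the snake graph. -/
noncomputable def matchNum (a : List ℕ) : ℕ :=
  Nat.card {P : Set (Sym2 (ℤ × ℤ)) // IsSnakePerfectMatching a P}

/-!
Build the snake graph one tile at a time. Tile `m + 1` is glued to the first `m` tiles along a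
side `xy` and brings two new vertices `u`, `v` and the edges `xu`, `uv`, `yv`. A perfect matching
either contains `uv`, or matches `u` to `x` and `v` to `y`; hence `A (m + 1) = A m + C m`, where
`A m` counts the perfect matchings of the first `m` tiles and `C m` those of the same graph with
`x` and `y` deleted. The side along which tile `m + 2` is glued is `uv` if the snake goes
straight on, and then `C (m + 1) = A m`; it is `yv` if the snake turns, and then `u` is forced to
`x`, so `C (m + 1) = C m`. The snake goes straight on exactly at `ℓ₁, …, ℓₙ₋₁`, so between two of
these `C` is constant and `A` grows by `aᵢ · C`, which is the continuant recursion
`K(a₁,…,aᵢ) = aᵢ K(a₁,…,aᵢ₋₁) + K(a₁,…,aᵢ₋₂)`.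
-/

section PerfectMatchings

variable {α : Type*}

/-- `P` is a perfect matching of the subgraph induced on `W` of the graph with edge set `E`. -/
def IsPerfectMatchingOn (W : Set α) (E P : Set (Sym2 α)) : Prop :=
  P ⊆ E ∩ W.sym2 ∧ ∀ w ∈ W, ∃! e, e ∈ P ∧ w ∈ e

noncomputable def perfectMatchingCount (W : Set α) (E : Set (Sym2 α)) : ℕ :=
  Nat.card {P // IsPerfectMatchingOn W E P}

variable {W : Set α} {E P : Set (Sym2 α)} {x u : α}

lemma mem_of_mem_sym2 {e : Sym2 α} (he : e ∈ W.sym2) {w : α} (hw : w ∈ e) : w ∈ W :=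
  Set.mem_sym2_iff_subset.1 he hw

lemma isPerfectMatchingOn_iff_of_subset_sym2 (hE : E ⊆ W.sym2) :
    IsPerfectMatchingOn W E P ↔ P ⊆ E ∧ ∀ w ∈ W, ∃! e, e ∈ P ∧ w ∈ e := by
  rw [IsPerfectMatchingOn, Set.inter_eq_left.2 hE]

lemma perfectMatchingCount_congr {E' : Set (Sym2 α)} (h : E ∩ W.sym2 = E' ∩ W.sym2) :
    perfectMatchingCount W E = perfectMatchingCount W E' := by
  simp only [perfectMatchingCount, IsPerfectMatchingOn, h]

lemma perfectMatchingCount_empty (E : Set (Sym2 α)) : perfectMatchingCount ∅ E = 1 := by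
  have : ∀ P, IsPerfectMatchingOn ∅ E P ↔ P = ∅ := by
    simp [IsPerfectMatchingOn]
  rw [perfectMatchingCount, Nat.card_congr (Equiv.subtypeEquivRight this), Nat.card_unique]

lemma finite_perfectMatchings (hE : E.Finite) : Finite {P // IsPerfectMatchingOn W E P} :=
  have := hE.finite_subsets.to_subtype
  Finite.of_injective (fun P => (⟨P.1, fun _ he => (P.2.1 he).1⟩ : {P | P ⊆ E}))
    fun _ _ h => Subtype.ext (congrArg Subtype.val h :)

lemma IsPerfectMatchingOn.diff_edge (hP : IsPerfectMatchingOn W E P) (hxu : s(x, u) ∈ P) :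
    IsPerfectMatchingOn (W \ {x, u}) E (P \ {s(x, u)}) := by
  obtain ⟨hPE, hcov⟩ := hP
  have hunique : ∀ e ∈ P, ∀ w ∈ e, w ∈ s(x, u) → e = s(x, u) := fun e he w hwe hw =>
    (hcov w (mem_of_mem_sym2 (hPE hxu).2 hw)).unique ⟨he, hwe⟩ ⟨hxu, hw⟩
  refine ⟨fun e ⟨he, hne⟩ => ⟨(hPE he).1, Set.mem_sym2_iff_subset.2 fun w hw => ?_⟩, ?_⟩
  · refine ⟨mem_of_mem_sym2 (hPE he).2 hw, fun hwxu => hne (hunique e he w hw ?_)⟩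
    rcases hwxu with rfl | rfl <;> simp
  · rintro w ⟨hwW, hwxu⟩
    obtain ⟨e, ⟨he, hwe⟩, huniq⟩ := hcov w hwW
    refine ⟨e, ⟨⟨he, fun h => hwxu ?_⟩, hwe⟩, fun f ⟨⟨hf, _⟩, hwf⟩ => huniq f ⟨hf, hwf⟩⟩
    rw [Set.mem_singleton_iff.1 h, Sym2.mem_iff] at hwe
    simpa using hwe

lemma IsPerfectMatchingOn.insert_edge {Q : Set (Sym2 α)}
    (hQ : IsPerfectMatchingOn (W \ {x, u}) E Q) (hx : x ∈ W) (hu : u ∈ W) (hxuE : s(x, u) ∈ E) :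
    IsPerfectMatchingOn W E (insert s(x, u) Q) := by
  obtain ⟨hQE, hcov⟩ := hQ
  have hQW : ∀ e ∈ Q, ∀ w ∈ e, w ∈ W \ {x, u} := fun e he w hw => mem_of_mem_sym2 (hQE he).2 hw
  refine ⟨Set.insert_subset ⟨hxuE, hx, hu⟩ fun e he =>
    ⟨(hQE he).1, Set.mem_sym2_iff_subset.2 fun w hw => (hQW e he w hw).1⟩, fun w hw => ?_⟩
  by_cases hwxu : w ∈ ({x, u} : Set α)
  · have hw' : w ∈ s(x, u) := by rcases hwxu with rfl | rfl <;> simp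
    refine ⟨s(x, u), ⟨Set.mem_insert _ _, hw'⟩, fun f ⟨hf, hwf⟩ => ?_⟩
    rcases hf with rfl | hf
    · rfl
    · exact absurd hwxu (hQW f hf w hwf).2
  · obtain ⟨e, ⟨he, hwe⟩, huniq⟩ := hcov w ⟨hw, hwxu⟩
    refine ⟨e, ⟨Set.mem_insert_of_mem _ he, hwe⟩, fun f ⟨hf, hwf⟩ => ?_⟩
    rcases hf with rfl | hf
    · rw [Sym2.mem_iff] at hwf
      exact absurd (by simpa using hwf) hwxu
    · exact huniq f ⟨hf, hwf⟩

def perfectMatchingsThroughEquiv (hx : x ∈ W) (hu : u ∈ W) (hxuE : s(x, u) ∈ E) :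
    {P // IsPerfectMatchingOn W E P ∧ s(x, u) ∈ P} ≃
      {Q // IsPerfectMatchingOn (W \ {x, u}) E Q} where
  toFun P := ⟨P.1 \ {s(x, u)}, P.2.1.diff_edge P.2.2⟩
  invFun Q := ⟨insert s(x, u) Q.1, Q.2.insert_edge hx hu hxuE, Set.mem_insert _ _⟩
  left_inv P := Subtype.ext <| by
    simp only [Set.insert_sdiff_singleton, Set.insert_eq_of_mem P.2.2]
  right_inv Q := Subtype.ext <| Set.insert_sdiff_self_of_notMem fun h =>
    (mem_of_mem_sym2 (Q.2.1 h).2 (Sym2.mem_mk_left x u)).2 (Set.mem_insert x _)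

lemma perfectMatchingCount_eq_of_forced (hx : x ∈ W) (hu : u ∈ W) (hxuE : s(x, u) ∈ E)
    (hforced : ∀ e ∈ E ∩ W.sym2, u ∈ e → e = s(x, u)) :
    perfectMatchingCount W E = perfectMatchingCount (W \ {x, u}) E := by
  have hmem : ∀ P, IsPerfectMatchingOn W E P → s(x, u) ∈ P := fun P hP => by
    obtain ⟨e, ⟨he, hue⟩, -⟩ := hP.2 u hu
    exact hforced e (hP.1 he) hue ▸ he
  exact Nat.card_congr <|
    (Equiv.subtypeEquivRight fun P => ⟨fun hP => ⟨hP, hmem P hP⟩, And.left⟩).trans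
      (perfectMatchingsThroughEquiv hx hu hxuE)

lemma perfectMatchingCount_eq_add (hE : E.Finite) (hx : x ∈ W) (hu : u ∈ W)
    (hxuE : s(x, u) ∈ E) :
    perfectMatchingCount W E =
      perfectMatchingCount (W \ {x, u}) E + perfectMatchingCount W (E \ {s(x, u)}) := by
  classical
  have := finite_perfectMatchings (W := W) hE
  have hwithout : ∀ P, IsPerfectMatchingOn W E P ∧ s(x, u) ∉ P ↔
      IsPerfectMatchingOn W (E \ {s(x, u)}) P := fun P => by
    simp only [IsPerfectMatchingOn, Set.subset_def, Set.mem_inter_iff, Set.mem_sdiff,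
      Set.mem_singleton_iff]
    constructor
    · rintro ⟨⟨hPE, hcov⟩, hxuP⟩
      exact ⟨fun e he => ⟨⟨(hPE e he).1, fun h => hxuP (h ▸ he)⟩, (hPE e he).2⟩, hcov⟩
    · rintro ⟨hPE, hcov⟩
      exact ⟨⟨fun e he => ⟨(hPE e he).1.1, (hPE e he).2⟩, hcov⟩, fun h => (hPE _ h).1.2 rfl⟩
  rw [perfectMatchingCount,
    ← Nat.card_congr (Equiv.sumCompl fun P : {P // IsPerfectMatchingOn W E P} => s(x, u) ∈ P.1),
    Nat.card_sum]
  congr 1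
  · exact Nat.card_congr <| (Equiv.subtypeSubtypeEquivSubtypeInter _ (s(x, u) ∈ ·)).trans
      (perfectMatchingsThroughEquiv hx hu hxuE)
  · exact Nat.card_congr <| (Equiv.subtypeSubtypeEquivSubtypeInter _ (s(x, u) ∉ ·)).trans
      (Equiv.subtypeEquivRight hwithout)

lemma perfectMatchingCount_edge (x y : α) : perfectMatchingCount {x, y} {s(x, y)} = 1 := by
  rw [perfectMatchingCount_eq_of_forced (x := x) (u := y) (by simp) (by simp)
    (Set.mem_singleton _) fun e he _ => he.1, Set.sdiff_self, perfectMatchingCount_empty]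

end PerfectMatchings

section Gluing

variable {α : Type*} {V : Set α} {E : Set (Sym2 α)} {x y u v : α}

lemma union_glue_inter_sym2 (hu : u ∉ V) (hv : v ∉ V) {W : Set α} (hW : W ⊆ V) :
    (E ∪ {s(x, u), s(u, v), s(y, v)}) ∩ W.sym2 = E ∩ W.sym2 := by
  ext e
  simp only [Set.mem_inter_iff, Set.mem_union, Set.mem_insert_iff, Set.mem_singleton_iff]
  constructor
  · rintro ⟨he | rfl | rfl | rfl, hW'⟩
    · exact ⟨he, hW'⟩
    exacts [(hu (hW hW'.2)).elim, (hu (hW hW'.1)).elim, (hv (hW hW'.2)).elim]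
  · exact fun ⟨he, hW'⟩ => ⟨Or.inl he, hW'⟩

lemma perfectMatchingCount_glue_straight (hu : u ∉ V) (hv : v ∉ V) :
    perfectMatchingCount ((V ∪ {u, v}) \ {u, v}) (E ∪ {s(x, u), s(u, v), s(y, v)}) =
      perfectMatchingCount V E := by
  have hV : (V ∪ {u, v}) \ {u, v} = V := by
    rw [Set.union_sdiff_right, sdiff_eq_left.2]
    exact Set.disjoint_insert_right.2 ⟨hu, Set.disjoint_singleton_right.2 hv⟩
  rw [hV, perfectMatchingCount_congr (union_glue_inter_sym2 hu hv subset_rfl)]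

lemma perfectMatchingCount_glue_turn (hE : E ⊆ V.sym2) (hx : x ∈ V) (hy : y ∈ V) (hu : u ∉ V)
    (hv : v ∉ V) (hxy : x ≠ y) (huv : u ≠ v) :
    perfectMatchingCount ((V ∪ {u, v}) \ {y, v}) (E ∪ {s(x, u), s(u, v), s(y, v)}) =
      perfectMatchingCount (V \ {x, y}) E := by
  have hxv : x ≠ v := ne_of_mem_of_not_mem hx hv
  have hyu : y ≠ u := ne_of_mem_of_not_mem hy hu
  rw [perfectMatchingCount_eq_of_forced (x := x) (u := u) (by simp [hx, hxy, hxv])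
    (by simp [huv, hyu.symm]) (by simp)]
  · have hW : ((V ∪ {u, v}) \ {y, v}) \ {x, u} = V \ {x, y} := by
      ext w
      simp only [Set.mem_sdiff, Set.mem_union, Set.mem_insert_iff, Set.mem_singleton_iff]
      grind
    rw [hW, perfectMatchingCount_congr (union_glue_inter_sym2 hu hv Set.sdiff_subset)]
  · rintro e ⟨he | rfl | rfl | rfl, heW⟩ hue
    · exact absurd (mem_of_mem_sym2 (hE he) hue) hu
    · rfl
    · exact absurd heW.2.2 (by simp)
    · exact absurd heW.1.2 (by simp)

lemma perfectMatchingCount_glue (hEfin : E.Finite) (hE : E ⊆ V.sym2) (hx : x ∈ V) (hy : y ∈ V)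
    (hu : u ∉ V) (hv : v ∉ V) (hxy : x ≠ y) (huv : u ≠ v) :
    perfectMatchingCount (V ∪ {u, v}) (E ∪ {s(x, u), s(u, v), s(y, v)}) =
      perfectMatchingCount V E + perfectMatchingCount (V \ {x, y}) E := by
  have hxu : x ≠ u := ne_of_mem_of_not_mem hx hu
  have hxv : x ≠ v := ne_of_mem_of_not_mem hx hv
  have hyu : y ≠ u := ne_of_mem_of_not_mem hy hu
  have hyv : y ≠ v := ne_of_mem_of_not_mem hy hv
  rw [perfectMatchingCount_eq_add (hEfin.union (by simp)) (x := u) (u := v) (by simp) (by simp)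
    (by simp), perfectMatchingCount_glue_straight hu hv]
  congr 1
  -- Without the edge `s(u, v)`, the vertex `u` must be matched to `x`, and then `v` to `y`.
  rw [perfectMatchingCount_eq_of_forced (x := x) (u := u) (by simp [hx]) (by simp)
      (by simp [hxu, hxv]),
    perfectMatchingCount_eq_of_forced (x := y) (u := v) (by simp [hy, hxy.symm, hyu])
      (by simp [hxv.symm, huv.symm]) (by simp [hyu, hyv])]
  · have hW : (((V ∪ {u, v}) \ {x, u}) \ {y, v}) = V \ {x, y} := by
      ext w
      simp only [Set.mem_sdiff, Set.mem_union, Set.mem_insert_iff, Set.mem_singleton_iff]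
      grind
    rw [hW]
    apply perfectMatchingCount_congr
    rw [Set.sdiff_inter_right_comm, union_glue_inter_sym2 hu hv Set.sdiff_subset,
      Set.sdiff_singleton_eq_self fun h => hu h.2.1.1]
  · rintro e ⟨⟨he | rfl | rfl | rfl, hne⟩, heW⟩ hve
    · exact absurd (mem_of_mem_sym2 (hE he) hve) hv
    · simp [hxv.symm, huv.symm] at hve
    · exact absurd rfl hne
    · rfl
  · rintro e ⟨⟨he | rfl | rfl | rfl, hne⟩, -⟩ hue
    · exact absurd (mem_of_mem_sym2 (hE he) hue) hu
    · rfl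
    · exact absurd rfl hne
    · simp [hyu.symm, huv] at hue

end Gluing

/-- The recursion satisfied by `(prefixCount a m, prefixCutCount a m)` below, for a snake whose
tiles `k - 1`, `k`, `k + 1` lie on a line exactly when `t k`. -/
def countRec (t : ℕ → Bool) : ℕ → ℕ × ℕ
  | 0 => (1, 1)
  | m + 1 => ((countRec t m).1 + (countRec t m).2,
      if t (m + 1) then (countRec t m).1 else (countRec t m).2)

lemma countRec_congr {t t' : ℕ → Bool} {m : ℕ} (h : ∀ k, 1 ≤ k → k ≤ m → t k = t' k) :
    countRec t m = countRec t' m := by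
  induction m with
  | zero => rfl
  | succ n ih =>
    rw [countRec, countRec, ih fun k h₁ h₂ => h k h₁ (by omega), h (n + 1) (by omega) le_rfl]

lemma countRec_add_of_forall_false (t : ℕ → Bool) (m j : ℕ)
    (h : ∀ k, m < k → k ≤ m + j → t k = false) :
    countRec t (m + j) = ((countRec t m).1 + j * (countRec t m).2, (countRec t m).2) := by
  induction j with
  | zero => simp
  | succ j ih =>
    rw [← add_assoc, countRec, ih fun k h₁ h₂ => h k h₁ (by omega), h _ (by omega) (by omega)]
    simp only [Bool.false_eq_true, if_false, Prod.mk.injEq, and_true]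
    ring

lemma isTurnPoint_iff (a : List ℕ) (k : ℕ) :
    isTurnPoint a k ↔ ∃ i, 1 ≤ i ∧ i < a.length ∧ (a.take i).sum = k := by
  simp [isTurnPoint, and_left_comm]

section TurnPointsOfConcat

variable (l : List ℕ) (x : ℕ)

lemma isTurnPoint_concat_of_lt {k : ℕ} (hk : k < l.sum) :
    isTurnPoint (l ++ [x]) k = isTurnPoint l k := by
  refine Bool.eq_iff_iff.2 ?_
  simp only [isTurnPoint_iff, List.length_append, List.length_singleton]
  constructor
  · rintro ⟨i, hi, hil, rfl⟩
    rw [List.take_append_of_le_length (by omega)] at hk ⊢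
    rcases (Nat.lt_succ_iff.1 hil).lt_or_eq with hil | rfl
    · exact ⟨i, hi, hil, rfl⟩
    · simp at hk
  · rintro ⟨i, hi, hil, rfl⟩
    exact ⟨i, hi, by omega, by rw [List.take_append_of_le_length hil.le]⟩

lemma isTurnPoint_concat_sum (hl : l ≠ []) : isTurnPoint (l ++ [x]) l.sum := by
  rw [isTurnPoint_iff]
  refine ⟨l.length, List.length_pos_iff.2 hl, by simp, ?_⟩
  rw [List.take_append_of_le_length le_rfl, List.take_length]

lemma isTurnPoint_concat_of_gt {k : ℕ} (hk : l.sum < k) : isTurnPoint (l ++ [x]) k = false := by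
  refine Bool.eq_false_iff.2 fun h => ?_
  obtain ⟨i, -, hil, rfl⟩ := (isTurnPoint_iff _ _).1 h
  simp only [List.length_append, List.length_singleton] at hil
  rw [List.take_append_of_le_length (by omega)] at hk
  have := List.sum_take_add_sum_drop l i
  omega

end TurnPointsOfConcat

lemma continuant_concat (l : List ℕ) (x : ℕ) (hl : l ≠ []) :
    continuant (l ++ [x]) = x * continuant l + continuant l.dropLast := by
  obtain ⟨b, t, ht⟩ := List.exists_cons_of_ne_nil (List.reverse_ne_nil_iff.2 hl)
  have hdrop : l.dropLast.reverse = t := by rw [← List.tail_reverse, ht, List.tail_cons]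
  simp only [continuant, List.reverse_append, List.reverse_singleton, List.singleton_append, ht,
    contAux, hdrop]

theorem countRec_isTurnPoint (a : List ℕ) (ha : a ≠ []) (hpos : ∀ x ∈ a, 0 < x) :
    countRec (isTurnPoint a) (a.sum - 1) = (continuant a, continuant a.dropLast) := by
  induction a using List.reverseRecOn with
  | nil => exact absurd rfl ha
  | append_singleton l x ih =>
    have hx : 0 < x := hpos x (by simp)
    have hfinal : ∀ k, l.sum < k → k ≤ l.sum + (x - 1) → isTurnPoint (l ++ [x]) k = false :=
      fun k hk _ => isTurnPoint_concat_of_gt l x hk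
    have hsum : (l ++ [x]).sum - 1 = l.sum + (x - 1) := by simp; omega
    rcases eq_or_ne l [] with rfl | hl
    · rw [hsum, countRec_add_of_forall_false _ _ _ hfinal]
      simp [countRec, continuant, contAux]
      omega
    · have hlpos : ∀ y ∈ l, 0 < y := fun y hy => hpos y (by simp [hy])
      have hls : 0 < l.sum := by
        obtain ⟨b, t, rfl⟩ := List.exists_cons_of_ne_nil hl
        have := hlpos b (by simp)
        simp only [List.sum_cons]
        omega
      have hprefix : countRec (isTurnPoint (l ++ [x])) (l.sum - 1) =
          (continuant l, continuant l.dropLast) := by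
        rw [← ih hl hlpos]
        exact countRec_congr fun k _ hk => isTurnPoint_concat_of_lt l x (by omega)
      have hturn : countRec (isTurnPoint (l ++ [x])) l.sum =
          (continuant l + continuant l.dropLast, continuant l) := by
        obtain ⟨s, hs⟩ : ∃ s, l.sum = s + 1 := ⟨l.sum - 1, by omega⟩
        rw [hs, countRec, ← hs, isTurnPoint_concat_sum l x hl, if_pos rfl,
          show s = l.sum - 1 by omega, hprefix]
      rw [hsum, countRec_add_of_forall_false _ _ _ hfinal, hturn, continuant_concat l x hl,
        List.dropLast_concat]
      obtain ⟨y, rfl⟩ : ∃ y, x = y + 1 := ⟨x - 1, by omega⟩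
      simp only [Nat.add_sub_cancel, Prod.mk.injEq, and_true]
      ring

section SnakeGeometry

def coordSum (p : ℤ × ℤ) : ℤ := p.1 + p.2

lemma coordSum_add (p q : ℤ × ℤ) : coordSum (p + q) = coordSum p + coordSum q := by
  simp only [coordSum, Prod.fst_add, Prod.snd_add]; ring

lemma coordSum_flipDir (p : ℤ × ℤ) : coordSum (flipDir p) = coordSum p := add_comm _ _

variable (a : List ℕ)

lemma delta_eq_or (k : ℕ) : delta a k = (1, 0) ∨ delta a k = (0, 1) := by
  induction k with
  | zero => exact Or.inl rfl
  | succ k ih =>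
    cases k with
    | zero => exact Or.inl rfl
    | succ k => rw [delta]; rcases ih with h | h <;> split <;> simp [h, flipDir]

lemma delta_add_flipDir (k : ℕ) : delta a k + flipDir (delta a k) = (1, 1) := by
  rcases delta_eq_or a k with h | h <;> simp [h, flipDir]

lemma delta_ne_flipDir (k : ℕ) : delta a k ≠ flipDir (delta a k) := by
  rcases delta_eq_or a k with h | h <;> simp [h, flipDir]

lemma coordSum_delta (k : ℕ) : coordSum (delta a k) = 1 := by
  rcases delta_eq_or a k with h | h <;> simp [h, coordSum]


lemma coordSum_snakePos (m : ℕ) : coordSum (snakePos a (m + 1)) = m := by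
  induction m with
  | zero => rfl
  | succ m ih =>
    rw [show snakePos a (m + 2) = snakePos a (m + 1) + delta a (m + 1) from rfl, coordSum_add, ih,
      coordSum_delta]
    push_cast; ring

lemma delta_succ_eq_or (m : ℕ) :
    delta a (m + 1) = delta a m ∨ delta a (m + 1) = flipDir (delta a m) := by
  cases m with
  | zero => exact Or.inl rfl
  | succ m => rw [delta]; split <;> simp

lemma delta_succ_of_isTurnPoint {m : ℕ} (h : isTurnPoint a (m + 1)) :
    delta a (m + 1) = delta a m := by
  cases m with
  | zero => rfl
  | succ m => rw [delta, if_pos h]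

lemma delta_succ_of_not_isTurnPoint {m : ℕ} (hm : m ≠ 0) (h : isTurnPoint a (m + 1) = false) :
    delta a (m + 1) = flipDir (delta a m) := by
  obtain ⟨m, rfl⟩ := Nat.exists_eq_succ_of_ne_zero hm
  rw [delta, if_neg (by simp [h])]

/- Tile `m + 1` meets the first `m` tiles along its side from `sharedLo a m` to `sharedHi a m`;
its two other corners `newLo a m`, `newHi a m` are new. (`Lo`/`Hi`: smaller/larger `coordSum`.) -/
def sharedLo (m : ℕ) : ℤ × ℤ := snakePos a (m + 1)
def sharedHi (m : ℕ) : ℤ × ℤ := snakePos a (m + 1) + flipDir (delta a m)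
def newLo (m : ℕ) : ℤ × ℤ := snakePos a (m + 1) + delta a m
def newHi (m : ℕ) : ℤ × ℤ := snakePos a (m + 1) + (1, 1)

lemma sharedHi_succ (m : ℕ) : sharedHi a (m + 1) = newHi a m := by
  rw [sharedHi, newHi, show snakePos a (m + 2) = snakePos a (m + 1) + delta a (m + 1) from rfl,
    add_assoc, delta_add_flipDir]

lemma sharedLo_succ_of_eq {m : ℕ} (h : delta a (m + 1) = delta a m) :
    sharedLo a (m + 1) = newLo a m := by
  rw [sharedLo, newLo, ← h]; rfl

lemma sharedLo_succ_of_eq_flipDir {m : ℕ} (h : delta a (m + 1) = flipDir (delta a m)) :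
    sharedLo a (m + 1) = sharedHi a m := by
  rw [sharedLo, sharedHi, ← h]; rfl

lemma coordSum_sharedLo (m : ℕ) : coordSum (sharedLo a m) = m := coordSum_snakePos a m

lemma coordSum_sharedHi (m : ℕ) : coordSum (sharedHi a m) = m + 1 := by
  rw [sharedHi, coordSum_add, coordSum_snakePos, coordSum_flipDir, coordSum_delta]

lemma coordSum_newLo (m : ℕ) : coordSum (newLo a m) = m + 1 := by
  rw [newLo, coordSum_add, coordSum_snakePos, coordSum_delta]

lemma coordSum_newHi (m : ℕ) : coordSum (newHi a m) = m + 2 := by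
  rw [newHi, coordSum_add, coordSum_snakePos]; rfl

lemma sharedLo_ne_sharedHi (m : ℕ) : sharedLo a m ≠ sharedHi a m :=
  ne_of_apply_ne coordSum (by rw [coordSum_sharedLo, coordSum_sharedHi]; omega)

lemma newLo_ne_newHi (m : ℕ) : newLo a m ≠ newHi a m :=
  ne_of_apply_ne coordSum (by rw [coordSum_newLo, coordSum_newHi]; omega)

lemma newLo_ne_sharedHi (m : ℕ) : newLo a m ≠ sharedHi a m := by
  simpa [newLo, sharedHi] using delta_ne_flipDir a m

/- The snake graph of the first `m` tiles, glued one tile at a time; with zero tiles it is the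
left side of tile `1`, so that every gluing step has the same shape. -/
def prefixVerts : ℕ → Set (ℤ × ℤ)
  | 0 => {sharedLo a 0, sharedHi a 0}
  | m + 1 => prefixVerts m ∪ {newLo a m, newHi a m}

def prefixEdges : ℕ → Set (Sym2 (ℤ × ℤ))
  | 0 => {s(sharedLo a 0, sharedHi a 0)}
  | m + 1 => prefixEdges m ∪
      {s(sharedLo a m, newLo a m), s(newLo a m, newHi a m), s(sharedHi a m, newHi a m)}

lemma sharedHi_mem_prefixVerts (m : ℕ) : sharedHi a m ∈ prefixVerts a m := by
  cases m with
  | zero => simp [prefixVerts]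
  | succ m => simp [prefixVerts, sharedHi_succ]

lemma sharedLo_mem_prefixVerts (m : ℕ) : sharedLo a m ∈ prefixVerts a m := by
  cases m with
  | zero => simp [prefixVerts]
  | succ m =>
    rcases delta_succ_eq_or a m with h | h
    · simp [prefixVerts, sharedLo_succ_of_eq a h]
    · simp [prefixVerts, sharedLo_succ_of_eq_flipDir a h, sharedHi_mem_prefixVerts]

lemma sharedEdge_mem_prefixEdges (m : ℕ) : s(sharedLo a m, sharedHi a m) ∈ prefixEdges a m := by
  cases m with
  | zero => simp [prefixEdges]
  | succ m =>
    rcases delta_succ_eq_or a m with h | h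
    · simp [prefixEdges, sharedLo_succ_of_eq a h, sharedHi_succ]
    · simp [prefixEdges, sharedLo_succ_of_eq_flipDir a h, sharedHi_succ]

lemma prefixEdges_subset_sym2 (m : ℕ) : prefixEdges a m ⊆ (prefixVerts a m).sym2 := by
  induction m with
  | zero => simp [prefixEdges, prefixVerts]
  | succ m ih =>
    refine Set.union_subset (fun e he => Set.mem_sym2_iff_subset.2
      ((Set.mem_sym2_iff_subset.1 (ih he)).trans Set.subset_union_left)) ?_
    simp [prefixVerts, Set.insert_subset_iff, sharedLo_mem_prefixVerts, sharedHi_mem_prefixVerts]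

lemma prefixEdges_finite (m : ℕ) : (prefixEdges a m).Finite := by
  induction m with
  | zero => simp [prefixEdges]
  | succ m ih => exact ih.union (by simp)

lemma coordSum_le_of_mem_prefixVerts {m : ℕ} {w : ℤ × ℤ} (hw : w ∈ prefixVerts a m) :
    coordSum w ≤ m ∨ w = sharedHi a m := by
  induction m with
  | zero =>
    rcases hw with rfl | rfl
    · exact Or.inl (coordSum_sharedLo a 0).le
    · exact Or.inr rfl
  | succ m ih =>
    rw [sharedHi_succ]
    rcases hw with hw | rfl | rfl
    · rcases ih hw with h | rfl
      · exact Or.inl (by push_cast; omega)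
      · exact Or.inl (by rw [coordSum_sharedHi]; push_cast; rfl)
    · exact Or.inl (by rw [coordSum_newLo]; push_cast; rfl)
    · exact Or.inr rfl

lemma newLo_not_mem_prefixVerts (m : ℕ) : newLo a m ∉ prefixVerts a m := fun h => by
  rcases coordSum_le_of_mem_prefixVerts a h with h | h
  · rw [coordSum_newLo] at h; omega
  · exact newLo_ne_sharedHi a m h

lemma newHi_not_mem_prefixVerts (m : ℕ) : newHi a m ∉ prefixVerts a m := fun h => by
  rcases coordSum_le_of_mem_prefixVerts a h with h | h
  · rw [coordSum_newHi] at h; omega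
  · have := congrArg coordSum h
    rw [coordSum_newHi, coordSum_sharedHi] at this; omega

end SnakeGeometry

section SnakeCount

variable (a : List ℕ)

noncomputable def prefixCount (m : ℕ) : ℕ :=
  perfectMatchingCount (prefixVerts a m) (prefixEdges a m)

noncomputable def prefixCutCount (m : ℕ) : ℕ :=
  perfectMatchingCount (prefixVerts a m \ {sharedLo a m, sharedHi a m}) (prefixEdges a m)

lemma prefixCount_zero : prefixCount a 0 = 1 := perfectMatchingCount_edge _ _

lemma prefixCutCount_zero : prefixCutCount a 0 = 1 := by
  rw [prefixCutCount, prefixVerts, Set.sdiff_self, perfectMatchingCount_empty]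

lemma prefixCount_succ (m : ℕ) : prefixCount a (m + 1) = prefixCount a m + prefixCutCount a m :=
  perfectMatchingCount_glue (prefixEdges_finite a m) (prefixEdges_subset_sym2 a m)
    (sharedLo_mem_prefixVerts a m) (sharedHi_mem_prefixVerts a m) (newLo_not_mem_prefixVerts a m)
    (newHi_not_mem_prefixVerts a m) (sharedLo_ne_sharedHi a m) (newLo_ne_newHi a m)

lemma prefixCutCount_succ_of_eq {m : ℕ} (h : delta a (m + 1) = delta a m) :
    prefixCutCount a (m + 1) = prefixCount a m := by
  rw [prefixCutCount, sharedLo_succ_of_eq a h, sharedHi_succ]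
  exact perfectMatchingCount_glue_straight (newLo_not_mem_prefixVerts a m)
    (newHi_not_mem_prefixVerts a m)

lemma prefixCutCount_succ_of_eq_flipDir {m : ℕ} (h : delta a (m + 1) = flipDir (delta a m)) :
    prefixCutCount a (m + 1) = prefixCutCount a m := by
  rw [prefixCutCount, sharedLo_succ_of_eq_flipDir a h, sharedHi_succ]
  exact perfectMatchingCount_glue_turn (prefixEdges_subset_sym2 a m)
    (sharedLo_mem_prefixVerts a m) (sharedHi_mem_prefixVerts a m) (newLo_not_mem_prefixVerts a m)
    (newHi_not_mem_prefixVerts a m) (sharedLo_ne_sharedHi a m) (newLo_ne_newHi a m)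

theorem prefixCounts_eq_countRec (m : ℕ) :
    (prefixCount a m, prefixCutCount a m) = countRec (isTurnPoint a) m := by
  induction m with
  | zero => rw [prefixCount_zero, prefixCutCount_zero]; rfl
  | succ m ih =>
    rw [countRec, ← ih, prefixCount_succ]
    congr 1
    cases h : isTurnPoint a (m + 1)
    · rcases eq_or_ne m 0 with rfl | hm
      · rw [prefixCutCount_succ_of_eq a rfl, prefixCount_zero, prefixCutCount_zero]; rfl
      · exact prefixCutCount_succ_of_eq_flipDir a (delta_succ_of_not_isTurnPoint a hm h)
    · exact prefixCutCount_succ_of_eq a (delta_succ_of_isTurnPoint a h)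

end SnakeCount

section SnakeGraph

variable (a : List ℕ)

lemma exists_mem_Icc_succ (p : ℕ → Prop) (n : ℕ) :
    (∃ k ∈ Finset.Icc 1 (n + 1), p k) ↔ (∃ k ∈ Finset.Icc 1 n, p k) ∨ p (n + 1) := by
  simp only [Finset.mem_Icc]
  constructor
  · rintro ⟨k, ⟨hk₁, hk₂⟩, hk⟩
    rcases (Nat.lt_or_eq_of_le hk₂) with hk₂ | rfl
    · exact Or.inl ⟨k, ⟨hk₁, by omega⟩, hk⟩
    · exact Or.inr hk
  · rintro (⟨k, ⟨hk₁, hk₂⟩, hk⟩ | h)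
    · exact ⟨k, ⟨hk₁, by omega⟩, hk⟩
    · exact ⟨n + 1, ⟨by omega, le_rfl⟩, h⟩

lemma exists_corner_iff (m : ℕ) (v : ℤ × ℤ) :
    (∃ ε ∈ corners, v = snakePos a (m + 1) + ε) ↔
      v = sharedLo a m ∨ v = sharedHi a m ∨ v = newLo a m ∨ v = newHi a m := by
  have h0 : snakePos a (m + 1) + (0, 0) = sharedLo a m := add_zero _
  rcases delta_eq_or a m with h | h <;>
    simp only [corners, Set.mem_insert_iff, Set.mem_singleton_iff, exists_eq_or_imp, exists_eq_left,
      sharedHi, newLo, newHi, h, flipDir, ← h0]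
  all_goals tauto

lemma tileSides_snakePos (m : ℕ) :
    tileSides (snakePos a (m + 1)) = {s(sharedLo a m, sharedHi a m), s(sharedLo a m, newLo a m),
      s(newLo a m, newHi a m), s(sharedHi a m, newHi a m)} := by
  rcases delta_eq_or a m with h | h <;>
  · simp only [tileSides, sharedLo, sharedHi, newLo, newHi, h, flipDir]
    ext e; simp only [Set.mem_insert_iff, Set.mem_singleton_iff]; tauto

lemma prefixVerts_succ_eq (m : ℕ) : prefixVerts a (m + 1) =
    {v | ∃ k ∈ Finset.Icc 1 (m + 1), ∃ ε ∈ corners, v = snakePos a k + ε} := by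
  induction m with
  | zero =>
    ext v
    change _ ↔ ∃ k ∈ Finset.Icc 1 (0 + 1), ∃ ε ∈ corners, v = snakePos a k + ε
    rw [exists_mem_Icc_succ, exists_corner_iff]
    simp [prefixVerts]
    tauto
  | succ m ih =>
    ext v
    have ih' : v ∈ prefixVerts a (m + 1) ↔
        ∃ k ∈ Finset.Icc 1 (m + 1), ∃ ε ∈ corners, v = snakePos a k + ε := by rw [ih]; rfl
    change _ ↔ ∃ k ∈ Finset.Icc 1 (m + 1 + 1), ∃ ε ∈ corners, v = snakePos a k + ε
    rw [exists_mem_Icc_succ, ← ih', exists_corner_iff, prefixVerts]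
    simp only [Set.mem_union, Set.mem_insert_iff, Set.mem_singleton_iff]
    have := sharedLo_mem_prefixVerts a (m + 1)
    have := sharedHi_mem_prefixVerts a (m + 1)
    constructor
    · tauto
    · rintro (h | rfl | rfl | h) <;> tauto

lemma prefixEdges_succ_eq (m : ℕ) : prefixEdges a (m + 1) =
    {e | ∃ k ∈ Finset.Icc 1 (m + 1), e ∈ tileSides (snakePos a k)} := by
  induction m with
  | zero =>
    ext e
    change _ ↔ ∃ k ∈ Finset.Icc 1 (0 + 1), e ∈ tileSides (snakePos a k)
    rw [exists_mem_Icc_succ, tileSides_snakePos]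
    simp [prefixEdges]
    tauto
  | succ m ih =>
    ext e
    have ih' : e ∈ prefixEdges a (m + 1) ↔
        ∃ k ∈ Finset.Icc 1 (m + 1), e ∈ tileSides (snakePos a k) := by rw [ih]; rfl
    change _ ↔ ∃ k ∈ Finset.Icc 1 (m + 1 + 1), e ∈ tileSides (snakePos a k)
    rw [exists_mem_Icc_succ, ← ih', tileSides_snakePos, prefixEdges]
    simp only [Set.mem_union, Set.mem_insert_iff, Set.mem_singleton_iff]
    have := sharedEdge_mem_prefixEdges a (m + 1)
    constructor
    · tauto
    · rintro (h | rfl | h | h | h) <;> tauto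

lemma matchNum_eq_prefixCount (h : 2 ≤ a.sum) : matchNum a = prefixCount a (a.sum - 1) := by
  obtain ⟨d, hd⟩ : ∃ d, a.sum - 1 = d + 1 := ⟨a.sum - 2, by omega⟩
  have hverts : snakeVerts a = prefixVerts a (d + 1) := by
    rw [snakeVerts, if_neg (by omega), hd, prefixVerts_succ_eq]
  have hedges : snakeEdges a = prefixEdges a (d + 1) := by
    rw [snakeEdges, if_neg (by omega), hd, prefixEdges_succ_eq]
  rw [hd, prefixCount, perfectMatchingCount, matchNum, ← hverts, ← hedges]
  refine Nat.card_congr (Equiv.subtypeEquivRight fun P => ?_)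
  rw [isPerfectMatchingOn_iff_of_subset_sym2 (hverts ▸ hedges ▸ prefixEdges_subset_sym2 a _)]
  rfl

lemma matchNum_singleton_one : matchNum [1] = 1 := by
  have hverts : snakeVerts [1] = {(0, 0), (1, 0)} := if_pos rfl
  have hedges : snakeEdges [1] = {s((0, 0), (1, 0))} := if_pos rfl
  calc matchNum [1] = perfectMatchingCount {((0 : ℤ), (0 : ℤ)), (1, 0)} {s((0, 0), (1, 0))} :=
        Nat.card_congr <| Equiv.subtypeEquivRight fun P => by
          rw [isPerfectMatchingOn_iff_of_subset_sym2 (by simp), IsSnakePerfectMatching, hverts,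
            hedges]
    _ = 1 := perfectMatchingCount_edge _ _

end SnakeGraph

lemma List.eq_singleton_one_of_sum_eq_one {a : List ℕ} (hpos : ∀ x ∈ a, 0 < x) (h : a.sum = 1) :
    a = [1] := by
  match a, hpos, h with
  | [], _, h => simp at h
  | [b], _, h => simpa using h
  | b :: c :: t, hpos, h =>
    have := hpos b (by simp)
    have := hpos c (by simp)
    simp only [List.sum_cons] at h
    omega

/-- For positive integers `a₁,…,aₙ`, the number of perfect matchings of the
snake graph `𝒢[a₁,…,aₙ]` equals the continuant `K(a₁,…,aₙ)`, i.e. the numerator of the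
continued fraction `[a₁,…,aₙ]` in lowest terms. -/
theorem matchNum_snake_eq_continuant (a : List ℕ) (ha : a ≠ []) (hpos : ∀ x ∈ a, 0 < x) :
    matchNum a = continuant a := by
  by_cases h₁ : a.sum = 1
  · rw [List.eq_singleton_one_of_sum_eq_one hpos h₁, matchNum_singleton_one]
    rfl
  · have h₂ : 2 ≤ a.sum := by
      obtain ⟨b, t, rfl⟩ := List.exists_cons_of_ne_nil ha
      have := hpos b (by simp)
      simp only [List.sum_cons] at h₁ ⊢
      omega
    have hcounts := prefixCounts_eq_countRec a (a.sum - 1)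
    rw [countRec_isTurnPoint a ha hpos, Prod.mk.injEq] at hcounts
    rw [matchNum_eq_prefixCount a h₂, hcounts.1]
end

section
/- For every integer N ≥ 2, the number of finite sequences (a₁, …, aₙ) of positive integers (n ≥ 1) with last term aₙ ≥ 2 and continuant K(a₁, …, aₙ) = N is equal to Euler's totient function φ(N). (Via the bijection between such sequences and snake graphs, this says that the number of snake graphs having precisely N perfect matchings equals φ(N).) -/
/-!
Reversing a sequence does not change its continuant, so `K(a₁, …, aₙ) = a₁ K(a₂, …, aₙ) + K(a₃, …, aₙ)`.
Hence `l ↦ (K(l), K(tail l))` turns prepending a term `a` into the map `(P, Q) ↦ (aP + Q, P)`,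
i.e. a step of Euclid's algorithm run backwards. It follows that the sequences of positive integers
with last term `≥ 2` and continuant `N` are exactly the lists of partial quotients of `N / q`,
for `1 ≤ q < N` coprime to `N`, and there are `φ(N)` such `q`.
-/

theorem contAux_cons {t : List ℕ} (ht : t ≠ []) (a : ℕ) :
    contAux (a :: t) = a * contAux t + contAux t.tail := by
  obtain ⟨b, s, rfl⟩ := List.exists_cons_of_ne_nil ht
  rfl

theorem contAux_append_singleton {l : List ℕ} (hl : l ≠ []) (a : ℕ) :
    contAux (l ++ [a]) = a * contAux l + contAux l.dropLast := by
  induction l using contAux.induct with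
  | case1 => contradiction
  | case2 b => simp only [List.cons_append, List.nil_append, contAux, List.dropLast_singleton]; ring
  | case3 b c t ih ih' =>
    rcases eq_or_ne t [] with rfl | ht
    · simp only [List.cons_append, List.nil_append, contAux, List.dropLast_cons_cons,
        List.dropLast_singleton]
      ring
    · show b * contAux (c :: t ++ [a]) + contAux (t ++ [a]) = _
      rw [ih (List.cons_ne_nil c t), ih' ht, List.dropLast_cons_cons,
        List.dropLast_cons_of_ne_nil ht, contAux.eq_3, contAux.eq_3]
      ring

theorem contAux_reverse (l : List ℕ) : contAux l.reverse = contAux l := by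
  induction l using contAux.induct with
  | case1 => rfl
  | case2 => rfl
  | case3 a b t ih ih' =>
    rw [List.reverse_cons, contAux_append_singleton (by simp), ih, List.reverse_cons,
      List.dropLast_concat, ih']
    rfl

theorem continuant_eq_contAux (l : List ℕ) : continuant l = contAux l := contAux_reverse l

theorem coprime_contAux_tail (l : List ℕ) : (contAux l).Coprime (contAux l.tail) := by
  induction l with
  | nil => rfl
  | cons a t ih =>
    rcases eq_or_ne t [] with rfl | ht
    · exact Nat.coprime_one_right a
    · rw [contAux_cons ht, List.tail_cons, Nat.coprime_mul_right_add_left]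
      exact ih.symm

/-- The lists `l` of partial quotients `[a₁; a₂, …, aₙ]` of rationals `> 1` written in the unique
form with `aₙ ≥ 2`; the rational is `contAux l / contAux l.tail`. -/
inductive IsCanonicalCF : List ℕ → Prop
  | singleton {a : ℕ} : 2 ≤ a → IsCanonicalCF [a]
  | cons {a : ℕ} {t : List ℕ} : 0 < a → IsCanonicalCF t → IsCanonicalCF (a :: t)

theorem isCanonicalCF_iff {l : List ℕ} : IsCanonicalCF l ↔
    l ≠ [] ∧ (∀ x ∈ l, 0 < x) ∧ ∀ x, l.getLast? = some x → 2 ≤ x := by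
  constructor
  · intro h
    induction h with
    | singleton ha => simpa using ⟨by omega, ha⟩
    | @cons a t ha _ ih =>
      obtain ⟨ht, hpos, hlast⟩ := ih
      obtain ⟨b, s, rfl⟩ := List.exists_cons_of_ne_nil ht
      refine ⟨List.cons_ne_nil _ _, by simpa [ha] using hpos, ?_⟩
      simpa only [List.getLast?_cons_cons] using hlast
  · induction l with
    | nil => simp
    | cons a t ih =>
      rintro ⟨-, hpos, hlast⟩
      rcases eq_or_ne t [] with rfl | ht
      · exact .singleton (hlast a rfl)
      · obtain ⟨b, s, rfl⟩ := List.exists_cons_of_ne_nil ht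
        refine .cons (hpos a List.mem_cons_self) (ih ⟨ht, fun x hx => hpos x ?_, ?_⟩)
        · exact List.mem_cons_of_mem a hx
        · simpa only [List.getLast?_cons_cons] using hlast

theorem IsCanonicalCF.ne_nil {l : List ℕ} (h : IsCanonicalCF l) : l ≠ [] := by
  cases h <;> exact List.cons_ne_nil _ _

theorem IsCanonicalCF.contAux_pos {l : List ℕ} (h : IsCanonicalCF l) : 0 < contAux l := by
  induction h with
  | singleton ha => exact Nat.zero_lt_of_lt ha
  | cons ha ht ih => rw [contAux_cons ht.ne_nil]; exact Nat.add_pos_left (Nat.mul_pos ha ih) _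

theorem IsCanonicalCF.contAux_tail_pos {l : List ℕ} (h : IsCanonicalCF l) :
    0 < contAux l.tail := by
  cases h with
  | singleton => exact Nat.one_pos
  | cons _ ht => exact ht.contAux_pos

theorem IsCanonicalCF.contAux_tail_lt {l : List ℕ} (h : IsCanonicalCF l) :
    contAux l.tail < contAux l := by
  induction h with
  | singleton ha => exact ha
  | cons ha ht =>
    have := ht.contAux_tail_pos
    rw [List.tail_cons, contAux_cons ht.ne_nil]
    nlinarith

/-- The partial quotients of `p / q` computed by Euclid's algorithm; the value at `q = 0` is junk. -/
def euclidQuotients : ℕ → ℕ → List ℕ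
  | p, 0 => [p]
  | p, 1 => [p]
  | p, q + 2 => p / (q + 2) :: euclidQuotients (q + 2) (p % (q + 2))
termination_by _ q => q
decreasing_by exact Nat.mod_lt _ (by omega)

theorem euclidQuotients_one (p : ℕ) : euclidQuotients p 1 = [p] := by
  rw [euclidQuotients]

theorem euclidQuotients_of_two_le (p : ℕ) {q : ℕ} (hq : 2 ≤ q) :
    euclidQuotients p q = p / q :: euclidQuotients q (p % q) := by
  obtain ⟨r, rfl⟩ := Nat.exists_eq_add_of_le' hq
  rw [euclidQuotients]

theorem euclidQuotients_mul_add {P Q : ℕ} (hQ : 0 < Q) (hQP : Q < P) (a : ℕ) :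
    euclidQuotients (a * P + Q) P = a :: euclidQuotients P Q := by
  rw [euclidQuotients_of_two_le _ (by omega), Nat.mul_add_mod_self_right, Nat.mod_eq_of_lt hQP,
    add_comm, Nat.add_mul_div_right _ _ (by omega), Nat.div_eq_of_lt hQP, zero_add]

theorem IsCanonicalCF.euclidQuotients_contAux {l : List ℕ} (h : IsCanonicalCF l) :
    euclidQuotients (contAux l) (contAux l.tail) = l := by
  induction h with
  | singleton => exact euclidQuotients_one _
  | @cons a t ha ht ih =>
    rw [List.tail_cons, contAux_cons ht.ne_nil,
      euclidQuotients_mul_add ht.contAux_tail_pos ht.contAux_tail_lt, ih]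

theorem euclidQuotients_spec {p q : ℕ} (hq : 0 < q) (hqp : q < p) (hpq : p.Coprime q) :
    IsCanonicalCF (euclidQuotients p q) ∧ contAux (euclidQuotients p q) = p ∧
      contAux (euclidQuotients p q).tail = q := by
  induction p, q using euclidQuotients.induct with
  | case1 => omega
  | case2 p =>
    rw [euclidQuotients_one]
    exact ⟨.singleton hqp, rfl, rfl⟩
  | case3 p q ih =>
    have hmod : (p % (q + 2)).Coprime (q + 2) := (ZMod.coprime_mod_iff_coprime _ _).2 hpq
    have hr : 0 < p % (q + 2) := by
      refine Nat.pos_of_ne_zero fun h => ?_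
      rw [h, Nat.coprime_zero_left] at hmod
      omega
    obtain ⟨hcf, hcont, hcont_tail⟩ := ih hr (Nat.mod_lt _ (by omega)) hmod.symm
    rw [euclidQuotients_of_two_le _ (by omega)]
    refine ⟨.cons (Nat.div_pos hqp.le (by omega)) hcf, ?_, hcont⟩
    rw [contAux_cons hcf.ne_nil, hcont, hcont_tail, Nat.div_add_mod']

theorem Nat.Coprime.pos_right_of_two_le {N q : ℕ} (hN : 2 ≤ N) (h : N.Coprime q) : 0 < q := by
  refine Nat.pos_of_ne_zero fun hq => ?_
  rw [hq, Nat.coprime_zero_right] at h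
  omega

def canonicalCFEquivTotatives {N : ℕ} (hN : 2 ≤ N) :
    {l : List ℕ // IsCanonicalCF l ∧ contAux l = N} ≃ {q : ℕ // q < N ∧ N.Coprime q} where
  toFun l := ⟨contAux l.1.tail, by
    obtain ⟨l, hl, rfl⟩ := l
    exact ⟨hl.contAux_tail_lt, coprime_contAux_tail l⟩⟩
  invFun q := ⟨euclidQuotients N q, by
    obtain ⟨q, hqN, hNq⟩ := q
    have := euclidQuotients_spec (hNq.pos_right_of_two_le hN) hqN hNq
    exact ⟨this.1, this.2.1⟩⟩
  left_inv := by
    rintro ⟨l, hl, rfl⟩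
    exact Subtype.ext hl.euclidQuotients_contAux
  right_inv := by
    rintro ⟨q, hqN, hNq⟩
    exact Subtype.ext (euclidQuotients_spec (hNq.pos_right_of_two_le hN) hqN hNq).2.2

/-- For every `N ≥ 2`, the number of nonempty finite sequences `(a₁,…,aₙ)`
of positive integers with last term `aₙ ≥ 2` and continuant `K(a₁,…,aₙ) = N` equals
Euler's totient `φ(N)`; equivalently, the number of snake graphs with precisely `N`
perfect matchings is `φ(N)`. -/
theorem card_continuant_eq_totient (N : ℕ) (hN : 2 ≤ N) :
    Nat.card {l : List ℕ // l ≠ [] ∧ (∀ x ∈ l, 0 < x) ∧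
      (∀ x, l.getLast? = some x → 2 ≤ x) ∧ continuant l = N} = Nat.totient N := by
  have hcond (l : List ℕ) : (l ≠ [] ∧ (∀ x ∈ l, 0 < x) ∧ (∀ x, l.getLast? = some x → 2 ≤ x) ∧
      continuant l = N) ↔ IsCanonicalCF l ∧ contAux l = N := by
    rw [isCanonicalCF_iff, continuant_eq_contAux]
    tauto
  rw [Nat.totient_eq_card_lt_and_coprime]
  exact Nat.card_congr ((Equiv.subtypeEquivRight hcond).trans (canonicalCFEquivTotatives hN))
end

section
/- Let x₁, x₂, x₃ be positive real numbers and define, for i ≥ 1, Lᵢ = (x₃/x₂)·(x₁/x₂)^{i−1} if i is even and Lᵢ = (x₃/x₁)·(x₂/x₁)^{i−1} if i is odd. Then the infinite continued fraction [L₁, L₂, L₃, …] converges; that is, the sequence of finite continued fractions cₙ = [L₁, …, Lₙ] (which are well-defined since every Lᵢ > 0) converges to a real number. -/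
/-- The value of the finite continued fraction `[z₁,…,zₙ] = z₁ + 1/(z₂ + 1/(⋯ + 1/zₙ))`
of real numbers. -/
noncomputable def cfVal : List ℝ → ℝ
  | [] => 0
  | [x] => x
  | x :: y :: t => x + (cfVal (y :: t))⁻¹

namespace CFaux

noncomputable def cm (a : ℝ) : Matrix (Fin 2) (Fin 2) ℝ := !![a, 1; 1, 0]

noncomputable def cmL (l : List ℝ) : Matrix (Fin 2) (Fin 2) ℝ := (l.map cm).prod

lemma cmL_nil : cmL [] = 1 := by simp [cmL]

lemma cmL_cons (a : ℝ) (l : List ℝ) : cmL (a :: l) = cm a * cmL l := by simp [cmL]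

lemma cmL_concat (l : List ℝ) (y : ℝ) : cmL (l ++ [y]) = cmL l * cm y := by simp [cmL]

lemma mul_cm_e0 (G : Matrix (Fin 2) (Fin 2) ℝ) (y : ℝ) (i : Fin 2) :
    (G * cm y) i 0 = G i 0 * y + G i 1 := by
  simp [cm, Matrix.mul_apply, Fin.sum_univ_two]

lemma mul_cm_e1 (G : Matrix (Fin 2) (Fin 2) ℝ) (y : ℝ) (i : Fin 2) :
    (G * cm y) i 1 = G i 0 := by
  simp [cm, Matrix.mul_apply, Fin.sum_univ_two]

lemma cm_mul_e0 (G : Matrix (Fin 2) (Fin 2) ℝ) (y : ℝ) (j : Fin 2) :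
    (cm y * G) 0 j = y * G 0 j + G 1 j := by
  simp [cm, Matrix.mul_apply, Fin.sum_univ_two]

lemma cm_mul_e1 (G : Matrix (Fin 2) (Fin 2) ℝ) (y : ℝ) (j : Fin 2) :
    (cm y * G) 1 j = G 0 j := by
  simp [cm, Matrix.mul_apply, Fin.sum_univ_two]

lemma cmL_nonneg : ∀ (l : List ℝ), (∀ x ∈ l, 0 ≤ x) → ∀ i j : Fin 2, 0 ≤ cmL l i j := by
  intro l
  induction l with
  | nil => intro _ i j; rw [cmL_nil]; rw [Matrix.one_apply]; split_ifs <;> norm_num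
  | cons a t ih =>
    intro hl i j
    have ha : 0 ≤ a := hl a (by simp)
    have iht := ih (fun x hx => hl x (by simp [hx]))
    rw [cmL_cons]
    fin_cases i
    · show 0 ≤ (cm a * cmL t) 0 j
      rw [cm_mul_e0]
      have := iht 0 j; have := iht 1 j
      positivity
    · show 0 ≤ (cm a * cmL t) 1 j
      rw [cm_mul_e1]; exact iht 0 j

lemma cmL00_pos (l : List ℝ) (hl : ∀ x ∈ l, 0 < x) : 0 < cmL l 0 0 := by
  induction l with
  | nil => rw [cmL_nil]; norm_num [Matrix.one_apply]
  | cons a t ih =>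
    have ha : 0 < a := hl a (by simp)
    have iht := ih (fun x hx => hl x (by simp [hx]))
    have h10 : 0 ≤ cmL t 1 0 := cmL_nonneg t (fun x hx => (hl x (by simp [hx])).le) 1 0
    rw [cmL_cons, cm_mul_e0]
    positivity

lemma cfVal_eq (l : List ℝ) (hl : ∀ x ∈ l, 0 < x) :
    cfVal l = cmL l 0 0 / cmL l 1 0 := by
  induction l with
  | nil =>
    rw [cmL_nil]
    show (0 : ℝ) = (1 : Matrix (Fin 2) (Fin 2) ℝ) 0 0 / (1 : Matrix (Fin 2) (Fin 2) ℝ) 1 0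
    norm_num [Matrix.one_apply]
  | cons a t ih =>
    match t with
    | [] =>
      rw [cmL_cons, cm_mul_e0, cm_mul_e1, cmL_nil]
      show a = (a * (1 : Matrix (Fin 2) (Fin 2) ℝ) 0 0 + (1 : Matrix (Fin 2) (Fin 2) ℝ) 1 0) /
        (1 : Matrix (Fin 2) (Fin 2) ℝ) 0 0
      norm_num [Matrix.one_apply]
    | b :: t' =>
      have htpos : ∀ x ∈ b :: t', 0 < x := fun x hx => hl x (by simp [hx])
      have hP : 0 < cmL (b :: t') 0 0 := cmL00_pos _ htpos
      rw [show cfVal (a :: b :: t') = a + (cfVal (b :: t'))⁻¹ from rfl, ih htpos]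
      rw [cmL_cons a (b :: t'), cm_mul_e0, cm_mul_e1]
      rw [inv_div]
      rw [eq_div_iff hP.ne', add_mul, div_mul_cancel₀ _ hP.ne']

lemma cmL_det (l : List ℝ) : (cmL l).det = (-1) ^ l.length := by
  induction l with
  | nil => simp [cmL_nil]
  | cons a t ih =>
    rw [cmL_cons, Matrix.det_mul, ih]
    simp only [cm, Matrix.det_fin_two_of, List.length_cons]
    ring

/-- The continuant matrix of the first `n` partial quotients `L 1, …, L n`. -/
noncomputable def Gm (L : ℕ → ℝ) (n : ℕ) : Matrix (Fin 2) (Fin 2) ℝ :=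
  cmL ((List.range' 1 n).map L)

lemma Gm_zero (L : ℕ → ℝ) : Gm L 0 = 1 := by simp [Gm, cmL_nil]

lemma Gm_succ (L : ℕ → ℝ) (n : ℕ) : Gm L (n + 1) = Gm L n * cm (L (n + 1)) := by
  have h : (List.range' 1 (n + 1)).map L = (List.range' 1 n).map L ++ [L (n + 1)] := by
    rw [List.range'_concat]
    simp [Nat.add_comm]
  rw [Gm, h, cmL_concat]; rfl

lemma Gm_det (L : ℕ → ℝ) (n : ℕ) :
    Gm L n 0 0 * Gm L n 1 1 - Gm L n 0 1 * Gm L n 1 0 = (-1) ^ n := by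
  have h := cmL_det ((List.range' 1 n).map L)
  rw [Matrix.det_fin_two] at h
  simpa [Gm, List.length_map, List.length_range'] using h

/-- Main convergence lemma for continued fractions with positive partial quotients
whose consecutive products are bounded below. -/
lemma cf_converges (L : ℕ → ℝ) (d : ℝ) (hd : 0 < d)
    (hpos : ∀ i, 1 ≤ i → 0 < L i)
    (hLL : ∀ n, 1 ≤ n → d ≤ L n * L (n + 1)) :
    ∃ α : ℝ, Filter.Tendsto (fun n => cfVal ((List.range' 1 n).map L))
      Filter.atTop (nhds α) := by
  set f : ℕ → ℝ := fun n => cfVal ((List.range' 1 n).map L) with hfdef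
  have hmem : ∀ n, ∀ x ∈ (List.range' 1 n).map L, 0 < x := by
    intro n x hx
    rw [List.mem_map] at hx
    obtain ⟨i, hi, rfl⟩ := hx
    rw [List.mem_range'_1] at hi
    exact hpos i hi.1
  have hGnn : ∀ n (i j : Fin 2), 0 ≤ Gm L n i j := fun n i j =>
    cmL_nonneg _ (fun x hx => (hmem n x hx).le) i j
  have hf : ∀ n, f n = Gm L n 0 0 / Gm L n 1 0 := fun n => cfVal_eq _ (hmem n)
  -- basic values
  have hG1 : Gm L 1 = cm (L 1) := by rw [Gm_succ, Gm_zero, one_mul]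
  have hq1 : Gm L 1 1 0 = 1 := by rw [hG1]; simp [cm]
  have hG1_11 : Gm L 1 1 1 = 0 := by rw [hG1]; simp [cm]
  have hq2 : Gm L 2 1 0 = L 2 := by
    have h := Gm_succ L 1
    norm_num at h
    rw [h, mul_cm_e0, hq1, hG1_11]
    ring
  -- positivity of the denominators
  have hqpos : ∀ n, 0 < Gm L (n + 1) 1 0 := by
    intro n
    induction n with
    | zero => rw [hq1]; norm_num
    | succ k ih =>
      rw [Gm_succ, mul_cm_e0]
      have h1 := hGnn (k + 1) 1 1
      have h2 := hpos (k + 2) (by omega)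
      nlinarith
  -- two-step growth
  set D : ℝ := 1 + d with hDdef
  have hD1 : 1 < D := by simp [hDdef]; linarith
  have hD0 : 0 < D := by linarith
  have hstep : ∀ n, D * Gm L n 1 0 ≤ Gm L (n + 2) 1 0 := by
    intro n
    have e2 : Gm L (n + 2) 1 0 = Gm L (n + 1) 1 0 * L (n + 2) + Gm L (n + 1) 1 1 := by
      rw [show n + 2 = (n + 1) + 1 from rfl, Gm_succ, mul_cm_e0]
    have e1 : Gm L (n + 1) 1 0 = Gm L n 1 0 * L (n + 1) + Gm L n 1 1 := by
      rw [Gm_succ, mul_cm_e0]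
    have e1' : Gm L (n + 1) 1 1 = Gm L n 1 0 := by rw [Gm_succ, mul_cm_e1]
    have hLLn := hLL (n + 1) (by omega)
    have h0 : 0 ≤ Gm L n 1 1 := hGnn n 1 1
    have h0' : 0 ≤ Gm L n 1 0 := hGnn n 1 0
    have hL2 := hpos (n + 2) (by omega)
    rw [e2, e1, e1']
    nlinarith [mul_nonneg h0 hL2.le, mul_le_mul_of_nonneg_left hLLn h0']
  have hL2pos := hpos 2 (by omega)
  -- geometric lower bounds
  have hgeo : ∀ m : ℕ, D ^ m ≤ Gm L (2 * m + 1) 1 0 ∧ D ^ m * L 2 ≤ Gm L (2 * m + 2) 1 0 := by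
    intro m
    induction m with
    | zero => simp [hq1, hq2]
    | succ k ih =>
      constructor
      · have h1 := hstep (2 * k + 1)
        have : D ^ (k + 1) = D * D ^ k := by ring
        rw [show 2 * (k + 1) + 1 = (2 * k + 1) + 2 by ring, this]
        calc D * D ^ k ≤ D * Gm L (2 * k + 1) 1 0 :=
              mul_le_mul_of_nonneg_left ih.1 hD0.le
          _ ≤ _ := h1
      · have h2 := hstep (2 * k + 2)
        have : D ^ (k + 1) * L 2 = D * (D ^ k * L 2) := by ring
        rw [show 2 * (k + 1) + 2 = (2 * k + 2) + 2 by ring, this]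
        calc D * (D ^ k * L 2) ≤ D * Gm L (2 * k + 2) 1 0 :=
              mul_le_mul_of_nonneg_left ih.2 hD0.le
          _ ≤ _ := h2
  -- product of consecutive denominators
  have hprod : ∀ n, 1 ≤ n → L 2 * D ^ (n - 1) ≤ Gm L n 1 0 * Gm L (n + 1) 1 0 := by
    intro n hn
    rcases Nat.even_or_odd n with he | ho
    · obtain ⟨k, rfl⟩ : ∃ k, n = 2 * k + 2 := by
        obtain ⟨m, hm⟩ := he; exact ⟨m - 1, by omega⟩
      have h1 := (hgeo k).2
      have h2 := (hgeo (k + 1)).1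
      rw [show 2 * (k + 1) + 1 = (2 * k + 2) + 1 by ring] at h2
      have : L 2 * D ^ (2 * k + 2 - 1) = (D ^ k * L 2) * D ^ (k + 1) := by
        rw [show 2 * k + 2 - 1 = 2 * k + 1 by omega]
        rw [show (2 : ℕ) * k + 1 = k + (k + 1) by ring, pow_add]
        ring
      rw [this]
      exact mul_le_mul h1 h2 (by positivity) (hqpos (2 * k + 1)).le
    · obtain ⟨k, rfl⟩ : ∃ k, n = 2 * k + 1 := by
        obtain ⟨m, hm⟩ := ho; exact ⟨m, by omega⟩
      have h1 := (hgeo k).1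
      have h2 := (hgeo k).2
      rw [show 2 * k + 2 = (2 * k + 1) + 1 from rfl] at h2
      have : L 2 * D ^ (2 * k + 1 - 1) = D ^ k * (D ^ k * L 2) := by
        rw [show 2 * k + 1 - 1 = 2 * k by omega]
        rw [show (2 : ℕ) * k = k + k by ring, pow_add]
        ring
      rw [this]
      exact mul_le_mul h1 h2 (by positivity) (hqpos (2 * k)).le
  -- determinant identity for consecutive numerators/denominators
  have hnum : ∀ n, Gm L (n + 1) 0 0 * Gm L n 1 0 - Gm L n 0 0 * Gm L (n + 1) 1 0
      = -(-1) ^ n := by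
    intro n
    have e0 : Gm L (n + 1) 0 0 = Gm L n 0 0 * L (n + 1) + Gm L n 0 1 := by
      rw [Gm_succ, mul_cm_e0]
    have e1 : Gm L (n + 1) 1 0 = Gm L n 1 0 * L (n + 1) + Gm L n 1 1 := by
      rw [Gm_succ, mul_cm_e0]
    have hdet := Gm_det L n
    rw [e0, e1]
    linear_combination -hdet
  -- distance between consecutive convergents
  have hdist : ∀ n, 1 ≤ n →
      dist (f n) (f (n + 1)) = 1 / (Gm L n 1 0 * Gm L (n + 1) 1 0) := by
    intro n hn
    obtain ⟨m, rfl⟩ : ∃ m, n = m + 1 := ⟨n - 1, by omega⟩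
    have hqn := hqpos m
    have hqn1 := hqpos (m + 1)
    rw [Real.dist_eq, hf, hf]
    rw [div_sub_div _ _ hqn.ne' hqn1.ne']
    rw [abs_div]
    have hnum' := hnum (m + 1)
    have : Gm L (m + 1) 0 0 * Gm L (m + 1 + 1) 1 0 - Gm L (m + 1) 1 0 * Gm L (m + 1 + 1) 0 0
        = (-1) ^ (m + 1) := by linarith [hnum (m + 1)]
    rw [this]
    rw [abs_pow, abs_neg, abs_one, one_pow]
    rw [abs_of_pos (by positivity : (0:ℝ) < Gm L (m+1) 1 0 * Gm L (m+1+1) 1 0)]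
  -- assemble the geometric Cauchy bound
  set C : ℝ := max (L 1) (D / L 2) with hCdef
  set r : ℝ := 1 / D with hrdef
  have hr1 : r < 1 := by
    rw [hrdef, div_lt_one hD0]; exact hD1
  have hr0 : 0 < r := by positivity
  have hbound : ∀ n, dist (f n) (f (n + 1)) ≤ C * r ^ n := by
    intro n
    rcases Nat.eq_zero_or_pos n with rfl | hn
    · have hf0 : f 0 = 0 := by simp [hfdef, cfVal]
      have hf1 : f 1 = L 1 := by
        have : (List.range' 1 1).map L = [L 1] := by simp
        simp [hfdef, this, cfVal]
      rw [hf0, hf1, pow_zero, mul_one, Real.dist_eq]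
      rw [abs_of_nonpos (by linarith [hpos 1 (le_refl 1)] : (0:ℝ) - L 1 ≤ 0), hCdef]
      have h := le_max_left (L 1) (D / L 2)
      linarith
    · rw [hdist n hn]
      have hpq : 0 < L 2 * D ^ (n - 1) := by positivity
      have h1 : 1 / (Gm L n 1 0 * Gm L (n + 1) 1 0) ≤ 1 / (L 2 * D ^ (n - 1)) :=
        one_div_le_one_div_of_le hpq (hprod n hn)
      have h2 : 1 / (L 2 * D ^ (n - 1)) = (D / L 2) * r ^ n := by
        obtain ⟨m, rfl⟩ : ∃ m, n = m + 1 := ⟨n - 1, by omega⟩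
        rw [show m + 1 - 1 = m from rfl, hrdef]
        rw [div_pow, one_pow]
        field_simp
        ring
      have h3 : (D / L 2) * r ^ n ≤ C * r ^ n :=
        mul_le_mul_of_nonneg_right (le_max_right _ _) (by positivity)
      calc 1 / (Gm L n 1 0 * Gm L (n + 1) 1 0)
          ≤ 1 / (L 2 * D ^ (n - 1)) := h1
        _ = (D / L 2) * r ^ n := h2
        _ ≤ C * r ^ n := h3
  exact cauchySeq_tendsto_of_complete (cauchySeq_of_le_geometric r C hr1 hbound)

end CFaux

/-- Let `x₁, x₂, x₃ > 0` and `Lᵢ = (x₃/x₂)(x₁/x₂)^{i−1}` for even `i`,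
`Lᵢ = (x₃/x₁)(x₂/x₁)^{i−1}` for odd `i` (`i ≥ 1`). Then the infinite continued fraction
`[L₁, L₂, L₃, …]` converges, i.e. the sequence `cₙ = [L₁,…,Lₙ]` has a real limit. -/
theorem cf_L_converges (x1 x2 x3 : ℝ) (h1 : 0 < x1) (h2 : 0 < x2) (h3 : 0 < x3)
    (L : ℕ → ℝ)
    (hL : ∀ i, 1 ≤ i → L i =
      if i % 2 = 0 then (x3 / x2) * (x1 / x2) ^ (i - 1)
      else (x3 / x1) * (x2 / x1) ^ (i - 1)) :
    ∃ α : ℝ, Filter.Tendsto (fun n => cfVal ((List.range' 1 n).map L))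
      Filter.atTop (nhds α) := by
  have hpos : ∀ i, 1 ≤ i → 0 < L i := by
    intro i hi
    rw [hL i hi]
    split_ifs <;> positivity
  set d : ℝ := min ((x3 / x1) ^ 2) ((x3 / x2) ^ 2) with hd_def
  have hd : 0 < d := by
    rw [hd_def]; apply lt_min <;> positivity
  have hLL : ∀ n, 1 ≤ n → d ≤ L n * L (n + 1) := by
    intro n hn
    obtain ⟨m, rfl⟩ : ∃ m, n = m + 1 := ⟨n - 1, by omega⟩
    have h21 : (x1 / x2) * (x2 / x1) = 1 := by field_simp
    have h12 : (x2 / x1) * (x1 / x2) = 1 := by field_simp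
    rcases Nat.mod_two_eq_zero_or_one (m + 1) with hpar | hpar
    · -- m+1 even, m+2 odd
      have hL1 := hL (m + 1) (by omega)
      rw [if_pos hpar] at hL1
      have hL2 := hL (m + 2) (by omega)
      rw [if_neg (by omega)] at hL2
      have key : L (m + 1) * L (m + 2) = (x3 / x1) ^ 2 := by
        calc L (m + 1) * L (m + 2)
            = ((x3 / x2) * (x3 / x1) * (x2 / x1)) * ((x1 / x2) * (x2 / x1)) ^ m := by
              rw [hL1, hL2, show m + 1 - 1 = m from rfl, show m + 2 - 1 = m + 1 from rfl,
                mul_pow, pow_succ]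
              ring
          _ = (x3 / x1) ^ 2 := by
              rw [h21, one_pow, mul_one]
              field_simp
      rw [key, hd_def]
      exact min_le_left _ _
    · -- m+1 odd, m+2 even
      have hL1 := hL (m + 1) (by omega)
      rw [if_neg (by omega)] at hL1
      have hL2 := hL (m + 2) (by omega)
      rw [if_pos (by omega)] at hL2
      have key : L (m + 1) * L (m + 2) = (x3 / x2) ^ 2 := by
        calc L (m + 1) * L (m + 2)
            = ((x3 / x1) * (x3 / x2) * (x1 / x2)) * ((x2 / x1) * (x1 / x2)) ^ m := by
              rw [hL1, hL2, show m + 1 - 1 = m from rfl, show m + 2 - 1 = m + 1 from rfl,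
                mul_pow, pow_succ]
              ring
          _ = (x3 / x2) ^ 2 := by
              rw [h12, one_pow, mul_one]
              field_simp
      rw [key, hd_def]
      exact min_le_right _ _
  exact CFaux.cf_converges L d hd hpos hLL
end

section
/- Let x₁, x₂, x₃ be positive real numbers, set x₁′ = (x₂² + x₃²)/x₁, and define, for i ≥ 1, Lᵢ = (x₃/x₂)·(x₁/x₂)^{i−1} if i is even and Lᵢ = (x₃/x₁)·(x₂/x₁)^{i−1} if i is odd. Then the sequence of finite continued fractions cₙ = [L₁, …, Lₙ] converges, and its limit is α = ((x₁′ − x₁) + √((x₁′ − x₁)² + 4x₃²)) / (2x₃). -/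
lemma cfVal_cons (x : ℝ) (l : List ℝ) : cfVal (x :: l) = x + (cfVal l)⁻¹ := by
  cases l <;> simp [cfVal]

lemma cfVal_nonneg (l : List ℝ) (h : ∀ x ∈ l, 0 < x) : 0 ≤ cfVal l := by
  induction l with
  | nil => simp [cfVal]
  | cons x t ih =>
    rw [cfVal_cons]
    have hx := h x (by simp)
    have ht := ih (fun y hy => h y (by simp [hy]))
    have := inv_nonneg.mpr ht
    linarith

lemma cfVal_pos (l : List ℝ) (h : ∀ x ∈ l, 0 < x) (hne : l ≠ []) : 0 < cfVal l := by
  cases l with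
  | nil => exact absurd rfl hne
  | cons x t =>
    rw [cfVal_cons]
    have hx := h x (by simp)
    have ht := cfVal_nonneg t (fun y hy => h y (by simp [hy]))
    have := inv_nonneg.mpr ht
    linarith

/-- alternately scale a list by `t, t⁻¹, t, t⁻¹, …`. -/
noncomputable def cfScale (t : ℝ) : List ℝ → List ℝ
  | [] => []
  | x :: l => t * x :: cfScale t⁻¹ l

lemma cfVal_cfScale (l : List ℝ) : ∀ t : ℝ, cfVal (cfScale t l) = t * cfVal l := by
  induction l with
  | nil => intro t; simp [cfScale, cfVal]
  | cons x l ih =>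
    intro t
    rw [cfScale, cfVal_cons, cfVal_cons, ih, mul_inv_rev, inv_inv, mul_add, mul_comm (cfVal l)⁻¹ t]

/-- The positive-fixed-point convergence lemma for iteration of a Möbius map with
positive entries and positive determinant. -/
lemma mobius_iter_tendsto (p q r α : ℝ) (hp : 0 < p) (hq : 0 < q) (hr : 0 < r)
    (hdet : q * r < p) (hαpos : 0 < α) (hαfix : r * α ^ 2 + (1 - p) * α - q = 0)
    (z0 : ℝ) (hz0 : 0 < z0) :
    Filter.Tendsto (fun k => (fun z => (p * z + q) / (r * z + 1))^[k] z0) Filter.atTop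
      (nhds α) := by
  set g : ℝ → ℝ := fun z => (p * z + q) / (r * z + 1) with hg
  have hgpos : ∀ z : ℝ, 0 ≤ z → 0 < g z := fun z hz => by
    have : 0 < r * z + 1 := by nlinarith
    have : 0 < p * z + q := by nlinarith
    positivity
  have hmono : ∀ z w : ℝ, 0 ≤ z → z ≤ w → g z ≤ g w := by
    intro z w hz hzw
    have hz1 : (0:ℝ) < r * z + 1 := by nlinarith
    have hw1 : (0:ℝ) < r * w + 1 := by nlinarith
    rw [hg]
    rw [div_le_div_iff₀ hz1 hw1]
    nlinarith
  have hub : ∀ z : ℝ, 0 ≤ z → g z ≤ p / r := by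
    intro z hz
    have hz1 : (0:ℝ) < r * z + 1 := by nlinarith
    rw [hg, div_le_div_iff₀ hz1 hr]
    nlinarith
  have hiter_pos : ∀ k, 0 < g^[k] z0 := by
    intro k
    induction k with
    | zero => simpa using hz0
    | succ k ih => rw [Function.iterate_succ_apply']; exact hgpos _ ih.le
  obtain ⟨l, hT, hl0⟩ : ∃ l : ℝ, Filter.Tendsto (fun k => g^[k] z0) Filter.atTop (nhds l)
      ∧ 0 ≤ l := by
    rcases le_total z0 (g z0) with hc | hc
    · have key : ∀ k, g^[k] z0 ≤ g^[k + 1] z0 := by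
        intro k
        induction k with
        | zero => simpa using hc
        | succ k ih =>
          have h := hmono _ _ (hiter_pos k).le ih
          rwa [← Function.iterate_succ_apply' g k, ← Function.iterate_succ_apply' g (k+1)] at h
      have hmonoseq : Monotone fun k => g^[k] z0 := monotone_nat_of_le_succ key
      have hbdd : BddAbove (Set.range fun k => g^[k] z0) := by
        refine ⟨max z0 (p / r), ?_⟩
        rintro _ ⟨k, rfl⟩
        cases k with
        | zero => simpa using le_max_left _ _
        | succ k =>
          show g^[k+1] z0 ≤ _
          rw [Function.iterate_succ_apply']
          exact le_max_of_le_right (hub _ (hiter_pos k).le)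
      refine ⟨_, tendsto_atTop_ciSup hmonoseq hbdd, ?_⟩
      exact le_ciSup_of_le hbdd 0 (by simpa using hz0.le)
    · have key : ∀ k, g^[k + 1] z0 ≤ g^[k] z0 := by
        intro k
        induction k with
        | zero => simpa using hc
        | succ k ih =>
          have h := hmono _ _ (hiter_pos (k+1)).le ih
          rwa [← Function.iterate_succ_apply' g k, ← Function.iterate_succ_apply' g (k+1)] at h
      have hanti : Antitone fun k => g^[k] z0 := antitone_nat_of_succ_le key
      have hbdd : BddBelow (Set.range fun k => g^[k] z0) := by
        refine ⟨0, ?_⟩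
        rintro _ ⟨k, rfl⟩
        exact (hiter_pos k).le
      refine ⟨_, tendsto_atTop_ciInf hanti hbdd, ?_⟩
      exact le_ciInf fun k => (hiter_pos k).le
  have hl1 : (0:ℝ) < r * l + 1 := by nlinarith
  have hfix : g l = l := by
    have hcont : ContinuousAt g l := by
      apply ContinuousAt.div
      · fun_prop
      · fun_prop
      · exact hl1.ne'
    have h2 : Filter.Tendsto (fun k => g (g^[k] z0)) Filter.atTop (nhds (g l)) :=
      hcont.tendsto.comp hT
    have h1 : Filter.Tendsto (fun k => g (g^[k] z0)) Filter.atTop (nhds l) := by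
      have heq : (fun k => g (g^[k] z0)) = (fun k => g^[k] z0) ∘ (fun k => k + 1) := by
        funext k
        simp [Function.comp, Function.iterate_succ_apply']
      rw [heq]
      exact hT.comp (Filter.tendsto_add_atTop_nat 1)
    exact tendsto_nhds_unique h2 h1
  have hleq : r * l ^ 2 + (1 - p) * l - q = 0 := by
    have : p * l + q = l * (r * l + 1) := by
      rw [hg] at hfix
      field_simp at hfix
      linarith [hfix]
    nlinarith [this]
  have hfact : (l - α) * (r * (l + α) + 1 - p) = 0 := by linear_combination hleq - hαfix
  have hsecond : 0 < r * (l + α) + 1 - p := by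
    have hq' : α * (r * α + 1 - p) = q := by linear_combination hαfix
    have h3 : 0 < r * α + 1 - p := by
      by_contra hcon
      push_neg at hcon
      nlinarith [mul_nonpos_of_nonneg_of_nonpos hαpos.le hcon]
    nlinarith [mul_nonneg hr.le hl0]
  have : l = α := by
    rcases mul_eq_zero.mp hfact with h | h
    · linarith
    · linarith
  rwa [this] at hT

/-- Let `x₁, x₂, x₃ > 0`, `x₁′ = (x₂² + x₃²)/x₁`, and
`Lᵢ = (x₃/x₂)(x₁/x₂)^{i−1}` for even `i`, `Lᵢ = (x₃/x₁)(x₂/x₁)^{i−1}` for odd `i`.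
Then the sequence `cₙ = [L₁,…,Lₙ]` converges to
`α = ((x₁′ − x₁) + √((x₁′ − x₁)² + 4x₃²)) / (2x₃)`. -/
theorem cf_L_tendsto_alpha (x1 x2 x3 : ℝ) (h1 : 0 < x1) (h2 : 0 < x2) (h3 : 0 < x3)
    (L : ℕ → ℝ)
    (hL : ∀ i, 1 ≤ i → L i =
      if i % 2 = 0 then (x3 / x2) * (x1 / x2) ^ (i - 1)
      else (x3 / x1) * (x2 / x1) ^ (i - 1)) :
    Filter.Tendsto (fun n => cfVal ((List.range' 1 n).map L)) Filter.atTop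
      (nhds ((((x2 ^ 2 + x3 ^ 2) / x1 - x1) +
        Real.sqrt (((x2 ^ 2 + x3 ^ 2) / x1 - x1) ^ 2 + 4 * x3 ^ 2)) / (2 * x3))) := by
  have hx1 : x1 ≠ 0 := h1.ne'
  have hx2 : x2 ≠ 0 := h2.ne'
  have hx3 : x3 ≠ 0 := h3.ne'
  have hL1 : L 1 = x3 / x1 := by rw [hL 1 (by norm_num)]; norm_num
  have hL2 : L 2 = x3 / x2 * (x1 / x2) := by rw [hL 2 (by norm_num)]; norm_num
  have hLpos : ∀ i, 1 ≤ i → 0 < L i := by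
    intro i hi
    rw [hL i hi]
    split <;> positivity
  set c : ℕ → ℝ := fun m => if m % 2 = 0 then (x1 / x2) ^ 2 else (x2 / x1) ^ 2 with hc
  have hcinv : ∀ m, (c m)⁻¹ = c (m + 1) := by
    intro m
    rcases Nat.mod_two_eq_zero_or_one m with h | h
    · simp only [hc, h, show (m + 1) % 2 = 1 from by omega]
      norm_num
      rw [← inv_pow, inv_div]
    · simp only [hc, h, show (m + 1) % 2 = 0 from by omega]
      norm_num
      rw [← inv_pow, inv_div]
  have hshift : ∀ n m, 1 ≤ m →
      (List.range' (m + 2) n).map L = cfScale (c m) ((List.range' m n).map L) := by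
    intro n
    induction n with
    | zero => intro m hm; simp [cfScale]
    | succ n ih =>
      intro m hm
      rw [List.range'_succ, List.range'_succ, List.map_cons, List.map_cons]
      simp only [cfScale]
      congr 1
      · rw [hL m hm, hL (m + 2) (by omega), show (m + 2) % 2 = m % 2 from by omega,
          show m + 2 - 1 = (m - 1) + 2 from by omega]
        simp only [hc]
        rcases Nat.mod_two_eq_zero_or_one m with h | h <;> rw [h] <;> norm_num <;>
          rw [pow_add] <;> ring
      · rw [hcinv]
        exact ih (m + 1) (by omega)
  set s : ℕ → ℝ := fun n => cfVal ((List.range' 1 n).map L) with hs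
  have hspos : ∀ n, 1 ≤ n → 0 < s n := by
    intro n hn
    apply cfVal_pos
    · intro x hx
      simp only [List.mem_map] at hx
      obtain ⟨i, hi, rfl⟩ := hx
      exact hLpos i (List.mem_range'_1.mp hi).1
    · intro hcontra
      apply_fun List.length at hcontra
      simp at hcontra
      omega
  have hstep : ∀ n, s (n + 2) = L 1 + (L 2 + ((x2 / x1) ^ 2 * s n)⁻¹)⁻¹ := by
    intro n
    show cfVal ((List.range' 1 (n + 2)).map L) = _
    have e1 : List.range' 1 (n + 2) = 1 :: 2 :: List.range' 3 n := by
      rw [List.range'_succ, List.range'_succ]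
    rw [e1, List.map_cons, List.map_cons, cfVal_cons, cfVal_cons,
      show (3 : ℕ) = 1 + 2 from rfl, hshift n 1 le_rfl, cfVal_cfScale]
    simp only [hc]
    norm_num
    exact Or.inl rfl
  -- the Möbius parameters
  set p : ℝ := (x2 ^ 2 + x3 ^ 2) / x1 ^ 2 with hpdef
  set q : ℝ := x3 / x1 with hqdef
  have hp : 0 < p := by rw [hpdef]; positivity
  have hq : 0 < q := by rw [hqdef]; positivity
  have hdet : q * q < p := by
    rw [hpdef, hqdef, div_mul_div_comm, div_lt_div_iff₀ (by positivity) (by positivity)]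
    nlinarith [mul_pos (mul_pos h2 h2) (mul_pos h1 h1)]
  have hform : ∀ z : ℝ, 0 < z →
      L 1 + (L 2 + ((x2 / x1) ^ 2 * z)⁻¹)⁻¹ = (p * z + q) / (q * z + 1) := by
    intro z hz
    rw [hL1, hL2, hpdef, hqdef]
    have hd1 : (0 : ℝ) < (x2 / x1) ^ 2 * z := by positivity
    have hd2 : (0 : ℝ) < x3 / x2 * (x1 / x2) + ((x2 / x1) ^ 2 * z)⁻¹ := by positivity
    have hd3 : (0 : ℝ) < x3 / x1 * z + 1 := by positivity
    rw [inv_eq_one_div, inv_eq_one_div]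
    field_simp
    ring
  set X : ℝ := (x2 ^ 2 + x3 ^ 2) / x1 - x1 with hX
  set S : ℝ := Real.sqrt (X ^ 2 + 4 * x3 ^ 2) with hSdef
  have hS2 : S ^ 2 = X ^ 2 + 4 * x3 ^ 2 := Real.sq_sqrt (by positivity)
  have hSpos : 0 < S := Real.sqrt_pos.mpr (by positivity)
  set α : ℝ := (X + S) / (2 * x3) with hα
  have hXS : 0 < X + S := by
    by_contra hcon
    push_neg at hcon
    have h4 : S ≤ -X := by linarith
    nlinarith [hSpos.le]
  have hαpos : 0 < α := by rw [hα]; positivity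
  have hαfix : q * α ^ 2 + (1 - p) * α - q = 0 := by
    have hpX : 1 - p = -X / x1 := by
      rw [hpdef, hX]
      field_simp
      ring
    rw [hα, hqdef, hpX]
    field_simp
    linear_combination hS2
  -- the two subsequences are iterations of the Möbius map
  set g : ℝ → ℝ := fun z => (p * z + q) / (q * z + 1) with hg
  have hodd : ∀ k, s (2 * k + 1) = g^[k] (s 1) := by
    intro k
    induction k with
    | zero => simp
    | succ k ih =>
      rw [show 2 * (k + 1) + 1 = (2 * k + 1) + 2 from by ring, hstep,
        hform _ (hspos _ (by omega)), ih, Function.iterate_succ_apply']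
  have heven : ∀ k, s (2 * k + 2) = g^[k] (s 2) := by
    intro k
    induction k with
    | zero => simp
    | succ k ih =>
      rw [show 2 * (k + 1) + 2 = (2 * k + 2) + 2 from by ring, hstep,
        hform _ (hspos _ (by omega)), ih, Function.iterate_succ_apply']
  have hTodd : Filter.Tendsto (fun k => s (2 * k + 1)) Filter.atTop (nhds α) := by
    have h := mobius_iter_tendsto p q q α hp hq hq hdet hαpos hαfix (s 1) (hspos 1 le_rfl)
    have heq : (fun k => s (2 * k + 1)) = fun k => g^[k] (s 1) := funext hodd
    rw [heq]
    exact h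
  have hTeven : Filter.Tendsto (fun k => s (2 * k + 2)) Filter.atTop (nhds α) := by
    have h := mobius_iter_tendsto p q q α hp hq hq hdet hαpos hαfix (s 2) (hspos 2 (by omega))
    have heq : (fun k => s (2 * k + 2)) = fun k => g^[k] (s 2) := funext heven
    rw [heq]
    exact h
  rw [Metric.tendsto_atTop] at hTodd hTeven ⊢
  intro ε hε
  obtain ⟨N1, hN1⟩ := hTodd ε hε
  obtain ⟨N2, hN2⟩ := hTeven ε hε
  refine ⟨2 * (N1 + N2) + 2, fun n hn => ?_⟩
  rcases Nat.even_or_odd n with ⟨k, hk⟩ | ⟨k, hk⟩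
  · rw [show n = 2 * (k - 1) + 2 from by omega]
    exact hN2 (k - 1) (by omega)
  · rw [show n = 2 * k + 1 from by omega]
    exact hN1 k (by omega)
end
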